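/- With the setup of a lightlike hypersurface of an indefinite Sasakian manifold tangent to ζ, one has g(R(U,V)ζ, ζ) = -1 and g(R(U,ζ)V, ζ) = -1. -/

import Mathlib

/-!
Both identities reduce to the structure equations of the ambient Sasakian manifold.
For the first, `R(U,V)ζ = -A_N V` and `g(A_N V, ζ) = C(V, ζ) = v(V) = 1`.
For the second, all terms of `R(U,ζ)V` except `∇_U(φA*_ξ ζ) - ∇_ζ(φA*_ξ U)` are
`g`-orthogonal to `ζ`. Since `∇̄ζ = -φ̄`, for `W ⊥ ζ` one has `g(∇_X W, ζ) = ḡ(X, φ̄W)`;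
with `φ̄U = N` this gives `g(∇_U W, ζ) = -θ(W)` and `g(∇_ζ W, ζ) = 0`, and
`θ(φA*_ξ ζ) = B(ζ, U) = B(U, ζ) = u(U) = 1` by the symmetry of `B`.
-/

section AlmostContactMetric

variable {F M : Type*} [CommRing F] [AddCommGroup M] [Module F M]
  {g : M →ₗ[F] M →ₗ[F] F} {φ : M → M} {ξ : M} {η : M → F}

theorem bilin_phi_left_eq_neg (hφφ : ∀ X, φ (φ X) = -X + η X • ξ) (hηφ : ∀ X, η (φ X) = 0)
    (hgξ : ∀ X, g X ξ = η X) (hgφφ : ∀ X Y, g (φ X) (φ Y) = g X Y - η X * η Y) (X Y : M) :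
    g (φ X) Y = -g X (φ Y) := by
  have h := hgφφ X (φ Y)
  rw [hφφ, hηφ, mul_zero, sub_zero, map_add, map_neg, map_smul, hgξ, hηφ, smul_zero,
    add_zero] at h
  rw [← h, neg_neg]

variable {D : M → F → F} {nabla : M → M → M}

theorem dirDeriv_zero_of_metric
    (hmetric : ∀ X Y Z, D X (g Y Z) = g (nabla X Y) Z + g Y (nabla X Z)) (X : M) : D X 0 = 0 := by
  simpa using hmetric X 0 0

theorem bilin_nabla_zero_left
    (hmetric : ∀ X Y Z, D X (g Y Z) = g (nabla X Y) Z + g Y (nabla X Z)) (X Z : M) :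
    g (nabla X 0) Z = 0 := by
  simpa [dirDeriv_zero_of_metric hmetric] using (hmetric X 0 Z).symm

variable (hsymm : ∀ X Y, g X Y = g Y X) (hφξ : φ ξ = 0) (hηξ : η ξ = 1)
  (hηφ : ∀ X, η (φ X) = 0) (hgξ : ∀ X, g X ξ = η X)
  (hgφφ : ∀ X Y, g (φ X) (φ Y) = g X Y - η X * η Y)
  (hmetric : ∀ X Y Z, D X (g Y Z) = g (nabla X Y) Z + g Y (nabla X Z))
  (hnablaφ : ∀ X Y, nabla X (φ Y) - φ (nabla X Y) = η Y • X - g X Y • ξ)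
include hsymm hφξ hηξ hηφ hgξ hgφφ hmetric hnablaφ

theorem bilin_nabla_xi_of_orth {W : M} (hW : g W ξ = 0) (X : M) :
    g (nabla X ξ) W = -g X (φ W) := by
  have hφnabla : φ (nabla X ξ) = nabla X 0 - X + η X • ξ := by
    have h := hnablaφ X ξ
    rw [hφξ, hηξ, one_smul, hgξ] at h
    linear_combination (norm := module) -h
  have h := hgφφ (nabla X ξ) W
  rw [← hgξ W, hW, mul_zero, sub_zero, hφnabla, map_add, map_sub, map_smul] at h
  simp only [LinearMap.add_apply, LinearMap.sub_apply, LinearMap.smul_apply, smul_eq_mul,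
    bilin_nabla_zero_left hmetric, hsymm ξ, hgξ, hηφ, mul_zero] at h
  rw [← h]; ring

theorem bilin_nabla_apply_xi_of_orth {W : M} (hW : g W ξ = 0) (X : M) :
    g (nabla X W) ξ = g X (φ W) := by
  have h := hmetric X W ξ
  rw [hW, dirDeriv_zero_of_metric hmetric, hsymm W,
    bilin_nabla_xi_of_orth hsymm hφξ hηξ hηφ hgξ hgφφ hmetric hnablaφ hW] at h
  linear_combination -h

end AlmostContactMetric

section Hypersurface

variable {F M Mb : Type*} [CommRing F] [AddCommGroup M] [Module F M] [AddCommGroup Mb]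
  [Module F Mb] {incl : M →ₗ[F] Mb} {g : M →ₗ[F] M →ₗ[F] F} {gbar : Mb →ₗ[F] Mb →ₗ[F] F}
  {nabla : M → M → M} {nablab : Mb → Mb → Mb} {B : M → M → F} {N : Mb}

theorem bilin_ambient_nabla_incl (hg : ∀ X Y, g X Y = gbar (incl X) (incl Y))
    (hGauss : ∀ X Y, nablab (incl X) (incl Y) = incl (nabla X Y) + B X Y • N) (X Y Z : M) :
    gbar (nablab (incl X) (incl Y)) (incl Z) = g (nabla X Y) Z + B X Y * gbar N (incl Z) := by
  rw [hGauss, map_add, map_smul, LinearMap.add_apply, LinearMap.smul_apply, smul_eq_mul, hg]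

theorem secondFundamentalForm_symm (hg : ∀ X Y, g X Y = gbar (incl X) (incl Y))
    (hGauss : ∀ X Y, nablab (incl X) (incl Y) = incl (nabla X Y) + B X Y • N)
    {bracket : M → M → M} {bracketb : Mb → Mb → Mb}
    (htorsion : ∀ X Y, nablab X Y - nablab Y X = bracketb X Y)
    (hbracket : ∀ X Y, incl (bracket X Y) = bracketb (incl X) (incl Y))
    {ξ : M} (hξ : ∀ Z, g Z ξ = 0) (hNξ : gbar N (incl ξ) = 1) (X Y : M) : B X Y = B Y X := by
  have h := congrArg (fun W => gbar W (incl ξ)) (htorsion (incl X) (incl Y))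
  simp only [map_sub, LinearMap.sub_apply, bilin_ambient_nabla_incl hg hGauss, ← hbracket,
    ← hg, hξ, hNξ] at h
  linear_combination h

theorem bilin_apply_xi_eq_zero {φb : Mb → Mb} {ηb : Mb → F}
    (hgφφ : ∀ X Y, gbar (φb X) (φb Y) = gbar X Y - ηb X * ηb Y)
    (hg : ∀ X Y, g X Y = gbar (incl X) (incl Y)) {ξ V : M} (hV : φb (incl ξ) = -incl V)
    (hηξ : ηb (incl ξ) = 0) {φ : M → M} {u : M → F}
    (hφ : ∀ X, φb (incl X) = incl (φ X) + u X • N) (hu : ∀ X, u X = g X V)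
    (huφ : ∀ X, u (φ X) = 0) (hNV : gbar N (incl V) = 0) (Z : M) : g Z ξ = 0 := by
  have h := hgφφ (incl Z) (incl ξ)
  rw [hV, hφ, hηξ, mul_zero, sub_zero, map_neg, map_add, map_smul, LinearMap.add_apply,
    LinearMap.smul_apply, smul_eq_mul, ← hg, ← hu, huφ, hNV, mul_zero, add_zero, neg_zero] at h
  rw [hg, ← h]

end Hypersurface

theorem stmt_13_general
    (F : Type) [CommRing F]
    (Γb : Type) [AddCommGroup Γb] [Module F Γb]
    (gbar : Γb →ₗ[F] Γb →ₗ[F] F)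
    (nablab : Γb → Γb → Γb) (phib : Γb → Γb) (zetab : Γb) (etab : Γb → F)
    (Db : Γb → F → F) (bracketb : Γb → Γb → Γb)
    (hgbarSymm : ∀ X Y, gbar X Y = gbar Y X)
    (hSas1 : ∀ X, phib (phib X) = -X + etab X • zetab)
    (hSas2 : etab zetab = 1)
    (hSas3 : ∀ X, etab (phib X) = 0)
    (hSas4 : ∀ X, gbar X zetab = etab X)
    (hSas5 : ∀ X Y, gbar (phib X) (phib Y) = gbar X Y - etab X * etab Y)
    (hSas7 : ∀ X Y, nablab X (phib Y) - phib (nablab X Y) = etab Y • X - gbar X Y • zetab)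
    (hLC1 : ∀ X Y Z, Db X (gbar Y Z) = gbar (nablab X Y) Z + gbar Y (nablab X Z))
    (hLC2 : ∀ X Y, nablab X Y - nablab Y X = bracketb X Y)
    (Γ : Type) [AddCommGroup Γ] [Module F Γ]
    (incl : Γ →ₗ[F] Γb)
    (g : Γ →ₗ[F] Γ →ₗ[F] F)
    (hg : ∀ X Y, g X Y = gbar (incl X) (incl Y))
    (nabla : Γ → Γ → Γ) (B : Γ → Γ → F) (N : Γb) (xi : Γ)
    (hGauss : ∀ X Y, nablab (incl X) (incl Y) = incl (nabla X Y) + B X Y • N)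
    (AN : Γ → Γ) (tau : Γ → F)
    (Astar : Γ → Γ)
    (P : Γ → Γ) (theta : Γ → F)
    (htheta : ∀ X, theta X = gbar (incl X) N)
    (C : Γ → Γ → F)
    (hAstarB : ∀ X Y, g (Astar X) Y = B X Y)
    (hANC : ∀ X Y, g (AN X) (P Y) = C X (P Y))
    (hxiN : gbar (incl xi) N = 1)
    (zeta : Γ) (hzeta : incl zeta = zetab)
    (eta : Γ → F) (heta : ∀ X, eta X = etab (incl X))
    (U V : Γ) (hV : incl V = -(phib (incl xi)))
    (u v : Γ → F) (hu : ∀ X, u X = g X V) (hv : ∀ X, v X = g X U)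
    (phi : Γ → Γ) (hphi : ∀ X, phib (incl X) = incl (phi X) + u X • N)
    (hPzeta : P zeta = zeta)
    (bracket : Γ → Γ → Γ)
    (hbracket : ∀ X Y, incl (bracket X Y) = bracketb (incl X) (incl Y))
    (R : Γ → Γ → Γ → Γ)
    (h21 : ∀ X Y, R X Y zeta = eta Y • X + u Y • AN X - eta X • Y - u X • AN Y)
    (hz8 : phi zeta = 0 ∧ phi U = 0 ∧ phi V = xi)
    (hz7 : eta zeta = 1 ∧ eta U = 0 ∧ eta V = 0 ∧ (∀ X, eta (phi X) = 0))
    (he76 : u zeta = 0 ∧ u U = 1 ∧ u V = 0 ∧ (∀ X, u (phi X) = 0))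
    (hz5 : v zeta = 0 ∧ v U = 0 ∧ v V = 1 ∧ (∀ X, v (phi X) = -(theta X)))
    (he80 : theta zeta = 0 ∧ theta U = 0 ∧ theta V = 0 ∧ theta xi = 1 ∧ (∀ X, theta (phi X) = v X))
    (hgzeta : ∀ X, g X zeta = eta X)
    (h10 : ∀ X, B X zeta = u X)
    (h12 : ∀ X, C X zeta = v X)
    (h73 : ∀ X Y, R X Y V =
      (nabla X (phi (Astar Y)) - phi (Astar (nabla X Y))) - (nabla Y (phi (Astar X)) - phi (Astar (nabla Y X)))
      + tau X • phi (Astar Y) - tau Y • phi (Astar X)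
      - (Db (incl X) (tau Y) - Db (incl Y) (tau X) - tau (bracket X Y)) • V)
    : g (R U V zeta) zeta = -1 ∧ g (R U zeta V) zeta = -1 := by
  obtain ⟨hφζ, hφU, hφV⟩ := hz8
  obtain ⟨-, hηU, hηV, hηφ⟩ := hz7
  obtain ⟨huζ, huU, huV, huφ⟩ := he76
  obtain ⟨-, -, hvV, -⟩ := hz5
  obtain ⟨hθζ, -, hθV, -, hθφ⟩ := he80
  have hφbζ : phib zetab = 0 := by rw [← hzeta, hphi, hφζ, huζ, map_zero, zero_smul, add_zero]
  have hφbU : phib (incl U) = N := by rw [hphi, hφU, huU, map_zero, one_smul, zero_add]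
  have hξ : ∀ Z, g Z xi = 0 :=
    bilin_apply_xi_eq_zero hSas5 hg (by rw [hV, neg_neg]) (by rw [← heta, ← hφV, hηφ]) hphi hu
      huφ (by rw [hgbarSymm, ← htheta, hθV])
  have hB := secondFundamentalForm_symm hg hGauss hLC2 hbracket hξ (by rw [hgbarSymm, hxiN])
  have hnablaζ : ∀ X W, eta W = 0 → g (nabla X W) zeta = gbar (incl X) (phib (incl W)) := by
    intro X W hW
    calc g (nabla X W) zeta = gbar (nablab (incl X) (incl W)) zetab := by
          rw [← hzeta, bilin_ambient_nabla_incl hg hGauss, hgbarSymm, ← htheta, hθζ, mul_zero,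
            add_zero]
      _ = gbar (incl X) (phib (incl W)) :=
          bilin_nabla_apply_xi_of_orth hgbarSymm hφbζ hSas2 hSas3 hSas4 hSas5 hLC1 hSas7
            (by rw [hSas4, ← heta, hW]) _
  have hUterm : g (nabla U (phi (Astar zeta))) zeta = -1 := by
    rw [hnablaζ _ _ (hηφ _), ← neg_neg (gbar _ _), ← bilin_phi_left_eq_neg hSas1 hSas3 hSas4 hSas5,
      hφbU, hgbarSymm, ← htheta, hθφ, hv, hAstarB, hB, h10, huU]
  have hζterm : g (nabla zeta (phi (Astar U))) zeta = 0 := by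
    rw [hnablaζ _ _ (hηφ _), hzeta, hgbarSymm, hSas4, hSas3]
  have hANVζ : g (AN V) zeta = 1 := by rw [← hPzeta, hANC, hPzeta, h12, hvV]
  constructor
  · simp only [h21, map_add, map_sub, map_smul, LinearMap.add_apply, LinearMap.sub_apply,
      LinearMap.smul_apply, smul_eq_mul, hANVζ, hgzeta, hηU, hηV, huU, huV]
    ring
  · simp only [h73, map_add, map_sub, map_smul, LinearMap.add_apply, LinearMap.sub_apply,
      LinearMap.smul_apply, smul_eq_mul, hUterm, hζterm, hgzeta, hηφ, hηV]
    ring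

theorem stmt_13
    (F : Type) [CommRing F]
    (Γb : Type) [AddCommGroup Γb] [Module F Γb]
    (gbar : Γb →ₗ[F] Γb →ₗ[F] F)
    (nablab : Γb → Γb → Γb) (phib : Γb → Γb) (zetab : Γb) (etab : Γb → F)
    (Db : Γb → F → F) (bracketb : Γb → Γb → Γb)
    (hgbarSymm : ∀ X Y, gbar X Y = gbar Y X)
    (hSas1 : ∀ X, phib (phib X) = -X + etab X • zetab)
    (hSas2 : etab zetab = 1)
    (hSas3 : ∀ X, etab (phib X) = 0)
    (hSas4 : ∀ X, gbar X zetab = etab X)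
    (hSas5 : ∀ X Y, gbar (phib X) (phib Y) = gbar X Y - etab X * etab Y)
    (hSas6 : ∀ X Y, (2 : F) * gbar (phib X) Y = Db X (etab Y) - Db Y (etab X) - etab (bracketb X Y))
    (hSas7 : ∀ X Y, nablab X (phib Y) - phib (nablab X Y) = etab Y • X - gbar X Y • zetab)
    (hLC1 : ∀ X Y Z, Db X (gbar Y Z) = gbar (nablab X Y) Z + gbar Y (nablab X Z))
    (hLC2 : ∀ X Y, nablab X Y - nablab Y X = bracketb X Y)
    (Γ : Type) [AddCommGroup Γ] [Module F Γ]
    (incl : Γ →ₗ[F] Γb)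
    (g : Γ →ₗ[F] Γ →ₗ[F] F)
    (hg : ∀ X Y, g X Y = gbar (incl X) (incl Y))
    (nabla : Γ → Γ → Γ) (B : Γ → Γ → F) (N : Γb) (xi : Γ)
    (hGauss : ∀ X Y, nablab (incl X) (incl Y) = incl (nabla X Y) + B X Y • N)
    (AN : Γ → Γ) (tau : Γ → F)
    (hWein : ∀ X, nablab (incl X) N = -(incl (AN X)) + tau X • N)
    (Astar : Γ → Γ)
    (hs13 : ∀ X, nabla X xi = -(Astar X) - tau X • xi)
    (P : Γ → Γ) (theta : Γ → F)
    (htheta : ∀ X, theta X = gbar (incl X) N)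
    (hdecomp : ∀ X, X = P X + theta X • xi)
    (nablas : Γ → Γ → Γ) (C : Γ → Γ → F)
    (hs12 : ∀ X Y, nabla X (P Y) = nablas X (P Y) + C X (P Y) • xi)
    (hAstarB : ∀ X Y, g (Astar X) Y = B X Y)
    (hANC : ∀ X Y, g (AN X) (P Y) = C X (P Y))
    (hxiN : gbar (incl xi) N = 1) (hNN : gbar N N = (0 : F))
    (zeta : Γ) (hzeta : incl zeta = zetab)
    (eta : Γ → F) (heta : ∀ X, eta X = etab (incl X))
    (U V : Γ) (hU : incl U = -(phib N)) (hV : incl V = -(phib (incl xi)))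
    (u v : Γ → F) (hu : ∀ X, u X = g X V) (hv : ∀ X, v X = g X U)
    (phi : Γ → Γ) (hphi : ∀ X, phib (incl X) = incl (phi X) + u X • N)
    (hPzeta : P zeta = zeta) (hPU : P U = U) (hPV : P V = V)
    (bracket : Γ → Γ → Γ)
    (hbracket : ∀ X Y, incl (bracket X Y) = bracketb (incl X) (incl Y))
    (R : Γ → Γ → Γ → Γ)
    (hR : ∀ X Y Z, R X Y Z = nabla X (nabla Y Z) - nabla Y (nabla X Z) - nabla (bracket X Y) Z)
    (h21 : ∀ X Y, R X Y zeta = eta Y • X + u Y • AN X - eta X • Y - u X • AN Y)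
    (hz8 : phi zeta = 0 ∧ phi U = 0 ∧ phi V = xi)
    (hz7 : eta zeta = 1 ∧ eta U = 0 ∧ eta V = 0 ∧ (∀ X, eta (phi X) = 0))
    (he76 : u zeta = 0 ∧ u U = 1 ∧ u V = 0 ∧ (∀ X, u (phi X) = 0))
    (hz5 : v zeta = 0 ∧ v U = 0 ∧ v V = 1 ∧ (∀ X, v (phi X) = -(theta X)))
    (he80 : theta zeta = 0 ∧ theta U = 0 ∧ theta V = 0 ∧ theta xi = 1 ∧ (∀ X, theta (phi X) = v X))
    (hgzeta : ∀ X, g X zeta = eta X)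
    (h10 : ∀ X, B X zeta = u X)
    (h12 : ∀ X, C X zeta = v X)
    (h14 : ∀ X, B X U = C X V)
    (h73 : ∀ X Y, R X Y V =
      (nabla X (phi (Astar Y)) - phi (Astar (nabla X Y))) - (nabla Y (phi (Astar X)) - phi (Astar (nabla Y X)))
      + tau X • phi (Astar Y) - tau Y • phi (Astar X)
      - (Db (incl X) (tau Y) - Db (incl Y) (tau X) - tau (bracket X Y)) • V)
    (h82 : ∀ X Y, g (nabla X (phi (Astar Y)) - phi (Astar (nabla X Y))) V = -(g (phi (Astar X)) (phi (Astar Y))) + B X V * B Y U)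
    : g (R U V zeta) zeta = -1 ∧ g (R U zeta V) zeta = -1 :=
  stmt_13_general F Γb gbar nablab phib zetab etab Db bracketb hgbarSymm hSas1 hSas2 hSas3 hSas4
    hSas5 hSas7 hLC1 hLC2 Γ incl g hg nabla B N xi hGauss AN tau Astar P theta htheta C hAstarB hANC
    hxiN zeta hzeta eta heta U V hV u v hu hv phi hphi hPzeta bracket hbracket R h21 hz8 hz7 he76
    hz5 he80 hgzeta h10 h12 h73
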